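/- arXiv:2209.00238 — 5 statements merged into one kernel-verified Lean document; each statement's English description precedes it below -/
import Mathlib

section
/- Let S₁, …, Sₘ be closed subsets of C \ {0}, where C is a salient closed convex cone in a finite-dimensional real vector space E (salient means x ∈ C and -x ∈ C imply x = 0). Then the Minkowski sum S₁ + ⋯ + Sₘ is closed. -/
/-!
Compactness of the unit vectors of `C` together with salience gives `c > 0` with
`c * ‖x‖ ≤ ‖x + y‖` for all `x, y ∈ C`. As `C` is a convex cone, the sum of all but one summand
of a decomposition `x = ∑ i, sᵢ` with `sᵢ ∈ Sᵢ` lies in `C`, so every summand has norm at most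
`‖x‖ / c`. Along a convergent sequence in `∑ i, Sᵢ` the decompositions therefore stay bounded,
and a convergent subsequence of them decomposes the limit.
-/

open Pointwise Filter Metric Set Topology

section SalientCone

variable {E : Type*} [NormedAddCommGroup E] [NormedSpace ℝ E] {C : Set E}

theorem zero_mem_of_isClosed_of_pos_smul_subset (hCclosed : IsClosed C)
    (hCcone : ∀ t : ℝ, 0 < t → t • C ⊆ C) {x : E} (hx : x ∈ C) : (0 : E) ∈ C := by
  have hlim : Tendsto (fun n : ℕ => (1 / ((n : ℝ) + 1)) • x) atTop (𝓝 0) := by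
    simpa using (tendsto_one_div_add_atTop_nhds_zero_nat (𝕜 := ℝ)).smul_const x
  exact hCclosed.mem_of_tendsto hlim
    (Eventually.of_forall fun n => hCcone _ (by positivity) (smul_mem_smul_set hx))

theorem add_mem_of_convex_of_pos_smul_subset (hCconv : Convex ℝ C)
    (hCcone : ∀ t : ℝ, 0 < t → t • C ⊆ C) {x y : E} (hx : x ∈ C) (hy : y ∈ C) :
    x + y ∈ C := by
  have hmid : (1 / 2 : ℝ) • x + (1 / 2 : ℝ) • y ∈ C := hCconv hx hy (by norm_num) (by norm_num)
    (by norm_num)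
  simpa [smul_add, smul_smul] using hCcone 2 two_pos (smul_mem_smul_set hmid)

/-- Take for `c` the minimum of `infDist · (-C)` over the unit vectors of `C`; it is positive
because salience keeps these vectors off the closed set `-C`. -/
theorem exists_pos_mul_norm_le_norm_add_of_salient [FiniteDimensional ℝ E]
    (hCclosed : IsClosed C) (hCcone : ∀ t : ℝ, 0 < t → t • C ⊆ C)
    (hCsalient : ∀ x ∈ C, -x ∈ C → x = 0) :
    ∃ c > (0 : ℝ), ∀ x ∈ C, ∀ y ∈ C, c * ‖x‖ ≤ ‖x + y‖ := by
  have hpos : ∀ u ∈ C ∩ sphere (0 : E) 1, 0 < infDist u (-C) := by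
    rintro u ⟨huC, hu⟩
    refine (hCclosed.neg.notMem_iff_infDist_pos ⟨-u, by simpa using huC⟩).1 fun hneg => ?_
    have hu0 : u = 0 := hCsalient u huC hneg
    simp [hu0] at hu
  obtain ⟨c, hc, hcle⟩ := ((isCompact_sphere (0 : E) 1).inter_left hCclosed).exists_forall_le'
    (continuous_infDist_pt _).continuousOn hpos
  refine ⟨c, hc, fun x hx y hy => ?_⟩
  rcases eq_or_ne x 0 with rfl | hx0
  · simp
  have hxpos : 0 < ‖x‖ := norm_pos_iff.2 hx0
  have hu : ‖x‖⁻¹ • x ∈ C ∩ sphere (0 : E) 1 :=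
    ⟨hCcone _ (inv_pos.2 hxpos) (smul_mem_smul_set hx), by simp [norm_smul, hxpos.ne']⟩
  have hv : -(‖x‖⁻¹ • y) ∈ -C := by simpa using hCcone _ (inv_pos.2 hxpos) (smul_mem_smul_set hy)
  have hbound : c ≤ ‖x‖⁻¹ * ‖x + y‖ := calc
    c ≤ infDist (‖x‖⁻¹ • x) (-C) := hcle _ hu
    _ ≤ dist (‖x‖⁻¹ • x) (-(‖x‖⁻¹ • y)) := infDist_le_dist_of_mem hv
    _ = ‖x‖⁻¹ * ‖x + y‖ := by
      rw [dist_eq_norm, sub_neg_eq_add, ← smul_add, norm_smul, norm_inv, norm_norm]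
  rwa [le_inv_mul_iff₀ hxpos, mul_comm] at hbound

theorem exists_pos_mul_norm_le_norm_sum_of_salient [FiniteDimensional ℝ E]
    (hCclosed : IsClosed C) (hCconv : Convex ℝ C) (hCcone : ∀ t : ℝ, 0 < t → t • C ⊆ C)
    (hCsalient : ∀ x ∈ C, -x ∈ C → x = 0) :
    ∃ c > (0 : ℝ), ∀ {ι : Type*} [Fintype ι] (f : ι → E), (∀ i, f i ∈ C) →
      ∀ j, c * ‖f j‖ ≤ ‖∑ i, f i‖ := by
  obtain ⟨c, hc, hle⟩ := exists_pos_mul_norm_le_norm_add_of_salient hCclosed hCcone hCsalient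
  refine ⟨c, hc, fun f hf j => ?_⟩
  classical
  have hrest : ∑ i ∈ Finset.univ.erase j, f i ∈ C :=
    Finset.sum_induction f (· ∈ C)
      (fun _ _ => add_mem_of_convex_of_pos_smul_subset hCconv hCcone)
      (zero_mem_of_isClosed_of_pos_smul_subset hCclosed hCcone (hf j)) fun i _ => hf i
  simpa [Finset.add_sum_erase] using hle _ (hf j) _ hrest

end SalientCone

theorem isClosed_sum_of_mul_norm_le_norm_sum {ι E : Type*} [Fintype ι] [NormedAddCommGroup E]
    [ProperSpace E] (S : ι → Set E) (hSclosed : ∀ i, IsClosed (S i)) {c : ℝ} (hc : 0 < c)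
    (hle : ∀ f : ι → E, (∀ i, f i ∈ S i) → ∀ j, c * ‖f j‖ ≤ ‖∑ i, f i‖) :
    IsClosed (∑ i, S i) := by
  refine isSeqClosed_iff_isClosed.1 fun x p hx hlim => ?_
  choose g hgS hgsum using fun n => (mem_fintype_sum S (x n)).1 (hx n)
  obtain ⟨M, hM⟩ := isBounded_iff_forall_norm_le.1 (isBounded_range_of_tendsto x hlim)
  have hgbdd : Bornology.IsBounded (range g) := by
    refine isBounded_iff_forall_norm_le.2 ⟨M / c, ?_⟩
    rintro _ ⟨n, rfl⟩
    have hM0 : 0 ≤ M / c := div_nonneg ((norm_nonneg _).trans (hM _ (mem_range_self 0))) hc.le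
    refine (pi_norm_le_iff_of_nonneg hM0).2 fun j => ?_
    rw [le_div_iff₀' hc]
    calc c * ‖g n j‖ ≤ ‖∑ i, g n i‖ := hle _ (hgS n) j
      _ ≤ M := hgsum n ▸ hM _ (mem_range_self n)
  obtain ⟨L, -, φ, hφ, hgφ⟩ := tendsto_subseq_of_bounded hgbdd fun n => mem_range_self n
  have hLS : ∀ i, L i ∈ S i := fun i =>
    (hSclosed i).mem_of_tendsto (tendsto_pi_nhds.1 hgφ i) (Eventually.of_forall fun n => hgS _ i)
  have hsumL : ∑ i, L i = p := by
    refine tendsto_nhds_unique (tendsto_finsetSum _ fun i _ => tendsto_pi_nhds.1 hgφ i) ?_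
    simpa only [Function.comp_def, hgsum] using hlim.comp hφ.tendsto_atTop
  exact (mem_fintype_sum S p).2 ⟨L, hLS, hsumL⟩

/-- If `S₁, …, Sₘ` are closed subsets of `C \ {0}`, where `C` is a salient closed convex
cone in a finite-dimensional real normed space, then the Minkowski sum `S₁ + ⋯ + Sₘ`
is closed. -/
theorem isClosed_sum_of_subsets_salient_cone
    {E : Type*} [NormedAddCommGroup E] [NormedSpace ℝ E] [FiniteDimensional ℝ E]
    (C : Set E) (hCclosed : IsClosed C) (hCconv : Convex ℝ C)
    (hCcone : ∀ t : ℝ, 0 < t → t • C ⊆ C)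
    (hCsalient : ∀ x ∈ C, -x ∈ C → x = 0)
    (m : ℕ) (S : Fin m → Set E)
    (hSclosed : ∀ i, IsClosed (S i))
    (hSsub : ∀ i, S i ⊆ C \ {0}) :
    IsClosed (∑ i, S i) := by
  obtain ⟨c, hc, hle⟩ :=
    exists_pos_mul_norm_le_norm_sum_of_salient hCclosed hCconv hCcone hCsalient
  exact isClosed_sum_of_mul_norm_le_norm_sum S hSclosed hc
    fun f hf => hle f fun i => (hSsub i (hf i)).1
end

section
/- For any nonempty set S in a finite-dimensional real inner product space, the closure of the domain of the concave support function ρ_S(x*) = inf{⟨x*, x⟩ | x ∈ S} equals the dual cone of the recession cone of the closed convex hull of S: cl(dom ρ_S) = (rec(cl conv S))*. -/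
open InnerProductSpace

/-!
Write `C` for the closed convex hull of `S`. A functional `⟪y, ·⟫` is bounded below on `S` iff it
is on `C`, so the domain of `ρ_S` is the barrier cone `B` of `C`. Moving along a recession
direction `d` keeps `⟪y, ·⟫` bounded below only if `⟪y, d⟫ ≥ 0`, and conversely, if `a + d ∉ C`
for some `a ∈ C`, a hyperplane separating `a + d` from `C` gives some `y ∈ B` with `⟪y, d⟫ < 0`.
Hence `rec C = B*`, and the bipolar theorem gives `(rec C)* = B** = cl B`.
-/

section Recession

variable {E : Type*} [AddMonoid E]

def recessionCone (C : Set E) : Set E := {d | ∀ a ∈ C, a + d ∈ C}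

theorem add_nsmul_mem_of_mem_recessionCone {C : Set E} {a d : E} (ha : a ∈ C)
    (hd : d ∈ recessionCone C) (n : ℕ) : a + n • d ∈ C := by
  induction n with
  | zero => simpa using ha
  | succ n ih => simpa [succ_nsmul, add_assoc] using hd _ ih

end Recession

section Barrier

variable {E : Type*} [NormedAddCommGroup E] [InnerProductSpace ℝ E]

/-- The barrier cone of `S`, with the sign convention of the concave support function. -/
def barrierCone (S : Set E) : PointedCone ℝ E where
  carrier := {y | ∃ m : ℝ, ∀ x ∈ S, m ≤ ⟪y, x⟫_ℝ}
  zero_mem' := ⟨0, fun x _ => by simp⟩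
  add_mem' := by
    rintro y₁ y₂ ⟨m₁, hm₁⟩ ⟨m₂, hm₂⟩
    exact ⟨m₁ + m₂, fun x hx => by rw [inner_add_left]; exact add_le_add (hm₁ x hx) (hm₂ x hx)⟩
  smul_mem' := by
    rintro ⟨c, hc⟩ y ⟨m, hm⟩
    exact ⟨c * m, fun x hx => by
      rw [Nonneg.mk_smul, real_inner_smul_left]; exact mul_le_mul_of_nonneg_left (hm x hx) hc⟩

theorem EReal.bot_lt_iInf₂_coe_iff {α : Type*} {S : Set α} {f : α → ℝ} :
    ⊥ < ⨅ x ∈ S, (f x : EReal) ↔ ∃ m : ℝ, ∀ x ∈ S, m ≤ f x := by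
  constructor
  · intro h
    obtain ⟨m, -, hm⟩ := EReal.lt_iff_exists_real_btwn.mp h
    exact ⟨m, fun x hx => EReal.coe_le_coe_iff.mp (hm.le.trans (iInf₂_le x hx))⟩
  · rintro ⟨m, hm⟩
    exact (EReal.bot_lt_coe m).trans_le (le_iInf₂ fun x hx => EReal.coe_le_coe_iff.mpr (hm x hx))

theorem le_of_mem_closure_convexHull {F : Type*} [AddCommGroup F] [Module ℝ F]
    [TopologicalSpace F] {S : Set F} {f : F →L[ℝ] ℝ} {m : ℝ} (h : ∀ x ∈ S, m ≤ f x) :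
    ∀ x ∈ closure (convexHull ℝ S), m ≤ f x :=
  closure_minimal (convexHull_min h (convex_halfSpace_ge f.isLinear m))
    (isClosed_le continuous_const f.continuous)

theorem barrierCone_closure_convexHull (S : Set E) :
    barrierCone (closure (convexHull ℝ S)) = barrierCone S := by
  ext y
  exact ⟨fun ⟨m, hm⟩ => ⟨m, fun x hx => hm x (subset_closure (subset_convexHull ℝ S hx))⟩,
    fun ⟨m, hm⟩ => ⟨m, le_of_mem_closure_convexHull (f := innerSL ℝ y) hm⟩⟩

theorem inner_nonneg_of_mem_recessionCone {C : Set E} (hC : C.Nonempty) {d y : E}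
    (hd : d ∈ recessionCone C) (hy : y ∈ barrierCone C) : 0 ≤ ⟪y, d⟫_ℝ := by
  obtain ⟨a, ha⟩ := hC
  obtain ⟨m, hm⟩ := hy
  by_contra! hneg
  obtain ⟨n, hn⟩ := exists_nat_gt ((⟪y, a⟫_ℝ - m) / -⟪y, d⟫_ℝ)
  have hbound : m ≤ ⟪y, a⟫_ℝ + n * ⟪y, d⟫_ℝ := by
    simpa [inner_add_right, ← Nat.cast_smul_eq_nsmul ℝ, real_inner_smul_right] using
      hm _ (add_nsmul_mem_of_mem_recessionCone ha hd n)
  rw [div_lt_iff₀ (neg_pos.mpr hneg)] at hn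
  linarith

theorem mem_recessionCone_of_forall_inner_nonneg [CompleteSpace E] {C : Set E}
    (hconv : Convex ℝ C) (hclosed : IsClosed C) {d : E}
    (hd : ∀ y ∈ barrierCone C, 0 ≤ ⟪y, d⟫_ℝ) : d ∈ recessionCone C := by
  intro a ha
  by_contra had
  obtain ⟨f, u, hfad, hfC⟩ := geometric_hahn_banach_point_closed hconv hclosed had
  set y := (toDual ℝ E).symm f
  have hyf : ∀ x, ⟪y, x⟫_ℝ = f x := fun x => toDual_symm_apply
  have hy : y ∈ barrierCone C := ⟨u, fun x hx => (hyf x).symm ▸ (hfC x hx).le⟩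
  have hyd := hd y hy
  have hfa := hfC a ha
  rw [hyf] at hyd
  rw [map_add] at hfad
  linarith

theorem recessionCone_eq_innerDual_barrierCone [CompleteSpace E] {C : Set E}
    (hne : C.Nonempty) (hconv : Convex ℝ C) (hclosed : IsClosed C) :
    recessionCone C = ProperCone.innerDual (barrierCone C : Set E) :=
  Set.ext fun _ => ⟨fun hd _ hy => inner_nonneg_of_mem_recessionCone hne hd hy,
    fun hd => mem_recessionCone_of_forall_inner_nonneg hconv hclosed fun _ hy => hd hy⟩

end Barrier

namespace ProperCone

variable {E : Type*} [NormedAddCommGroup E] [InnerProductSpace ℝ E] [CompleteSpace E]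

theorem innerDual_closure (s : Set E) : innerDual (closure s) = innerDual s := by
  refine le_antisymm (innerDual_le_innerDual subset_closure) fun y hy x hx => ?_
  exact closure_minimal (s := s) (t := {x | 0 ≤ ⟪x, y⟫_ℝ}) (fun z hz => hy hz)
    (isClosed_le continuous_const (continuous_id.inner continuous_const)) hx

theorem innerDual_innerDual_eq_closure (K : PointedCone ℝ E) :
    (innerDual (innerDual (K : Set E) : Set E) : Set E) = closure K := by
  rw [← innerDual_closure (K : Set E)]
  exact congrArg SetLike.coe (innerDual_innerDual (Submodule.closure K))

end ProperCone

/-- For any nonempty `S` in a finite-dimensional real inner product space, the closure of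
the domain of the concave support function `ρ_S(x*) = inf {⟪x*, x⟫ | x ∈ S}` (the set
where `ρ_S > -∞`) equals the dual cone of the recession cone of `cl conv S`. -/
theorem closure_domain_concaveSupport_eq_dualCone_recessionCone
    {E : Type*} [NormedAddCommGroup E] [InnerProductSpace ℝ E] [FiniteDimensional ℝ E]
    (S : Set E) (hS : S.Nonempty) :
    closure {y : E | (⊥ : EReal) < ⨅ x ∈ S, ((⟪y, x⟫_ℝ : ℝ) : EReal)} =
      {y : E | ∀ d ∈ {d : E | ∀ a ∈ closure (convexHull ℝ S),
          a + d ∈ closure (convexHull ℝ S)}, 0 ≤ ⟪y, d⟫_ℝ} := by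
  have : CompleteSpace E := FiniteDimensional.complete ℝ E
  have hdom : {y : E | (⊥ : EReal) < ⨅ x ∈ S, ((⟪y, x⟫_ℝ : ℝ) : EReal)} = barrierCone S :=
    Set.ext fun _ => EReal.bot_lt_iInf₂_coe_iff
  have hrec := recessionCone_eq_innerDual_barrierCone hS.convexHull.closure
    (convex_convexHull ℝ S).closure isClosed_closure
  calc closure {y : E | (⊥ : EReal) < ⨅ x ∈ S, ((⟪y, x⟫_ℝ : ℝ) : EReal)}
      = closure (barrierCone (closure (convexHull ℝ S)) : Set E) := by
        rw [hdom, barrierCone_closure_convexHull]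
    _ = ProperCone.innerDual (recessionCone (closure (convexHull ℝ S))) := by
        rw [hrec, ProperCone.innerDual_innerDual_eq_closure]
    _ = _ := by ext y; simp [recessionCone, real_inner_comm]
end

section
/- Let ℓ : Δⁿ → ℝ₊ⁿ be a loss function (Δⁿ the relative interior of the probability simplex in ℝⁿ) with superprediction set S = ℓ(Δⁿ) + ℝ₊ⁿ. Then ℓ is proper (i.e., ⟨ℓ(q), q⟩ ≤ ⟨ℓ(p), q⟩ for all p, q ∈ Δⁿ) if and only if for every p ∈ Δⁿ, ℓ(p) is a supergradient at p of the concave support function ρ of cl conv(S), where ρ(x) = inf{⟨s, x⟩ | s ∈ cl conv(S)}. -/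
open Pointwise InnerProductSpace

/-!
A proper loss attains its Bayes risk at the truth: `ℓ p` minimises `⟪·, p⟫` over `ℓ(Δⁿ)`, hence
over `S` (adding a nonnegative vector does not decrease `⟪·, p⟫` for `p > 0`), hence over
`cl conv S` (a closed half-space containing `S` contains it). So properness says exactly that
`ρ p = ⟪ℓ p, p⟫` on `Δⁿ`. Since `ρ 0 = 0` and `ρ ≤ ⟪ℓ p, ·⟫`, testing the supergradient inequality
at `q = 0` shows that `ℓ p` is a supergradient of `ρ` at `p` iff `ρ p = ⟪ℓ p, p⟫`.
-/

section ConcaveSupport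

variable {E : Type*} [NormedAddCommGroup E] [InnerProductSpace ℝ E]

noncomputable def concaveSupport (C : Set E) (x : E) : EReal :=
  ⨅ s ∈ C, ((⟪s, x⟫_ℝ : ℝ) : EReal)

theorem concaveSupport_le {C : Set E} {s : E} (hs : s ∈ C) (x : E) :
    concaveSupport C x ≤ ⟪s, x⟫_ℝ :=
  iInf₂_le s hs

theorem coe_le_concaveSupport_iff {C : Set E} {x : E} {c : ℝ} :
    (c : EReal) ≤ concaveSupport C x ↔ ∀ s ∈ C, c ≤ ⟪s, x⟫_ℝ := by
  simp only [concaveSupport, le_iInf₂_iff, EReal.coe_le_coe_iff]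

theorem concaveSupport_zero {C : Set E} (hC : C.Nonempty) : concaveSupport C 0 = 0 := by
  obtain ⟨s, hs⟩ := hC
  refine le_antisymm ?_ ?_
  · simpa using concaveSupport_le hs 0
  · simpa using (coe_le_concaveSupport_iff (c := 0)).2 fun s _ => (inner_zero_right s).ge

theorem le_inner_of_mem_closure_convexHull {S : Set E} {x s : E} {c : ℝ}
    (h : ∀ t ∈ S, c ≤ ⟪t, x⟫_ℝ) (hs : s ∈ closure (convexHull ℝ S)) : c ≤ ⟪s, x⟫_ℝ := by
  have hlin : IsLinearMap ℝ fun t : E => ⟪t, x⟫_ℝ :=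
    ⟨fun t u => inner_add_left t u x, fun r t => real_inner_smul_left t x r⟩
  refine closure_minimal (convexHull_min h (convex_halfSpace_ge hlin c)) ?_ hs
  exact isClosed_le (g := fun t : E => ⟪t, x⟫_ℝ) continuous_const (by fun_prop)

theorem concaveSupport_closure_convexHull (S : Set E) :
    concaveSupport (closure (convexHull ℝ S)) = concaveSupport S := by
  funext x
  refine le_antisymm
    (iInf₂_mono' fun s hs => ⟨s, subset_closure (subset_convexHull ℝ S hs), le_rfl⟩)
    (le_of_forall_lt_imp_le_of_dense fun c hc => ?_)
  induction c using EReal.rec with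
  | bot => exact bot_le
  | top => exact absurd hc not_top_lt
  | coe c =>
    rw [coe_le_concaveSupport_iff]
    exact fun s => le_inner_of_mem_closure_convexHull (coe_le_concaveSupport_iff.1 hc.le)

theorem supergradient_iff_eq_inner {ρ : E → EReal} {y p : E} (hρ0 : ρ 0 = 0)
    (hρy : ∀ x, ρ x ≤ ⟪y, x⟫_ℝ) :
    (∀ q, ρ q - ρ p ≤ ((⟪y, q - p⟫_ℝ : ℝ) : EReal)) ↔ ρ p = ⟪y, p⟫_ℝ := by
  constructor
  · intro h
    refine le_antisymm (hρy p) ?_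
    have h0 := h 0
    rwa [hρ0, zero_sub, zero_sub, inner_neg_right, EReal.coe_neg, EReal.neg_le_neg_iff] at h0
  · intro h q
    rw [h, inner_sub_right, EReal.coe_sub]
    exact EReal.sub_le_sub (hρy q) le_rfl

def IsProperLoss (ℓ : E → E) (Δ : Set E) : Prop :=
  ∀ p ∈ Δ, ∀ q ∈ Δ, ⟪ℓ q, q⟫_ℝ ≤ ⟪ℓ p, q⟫_ℝ

theorem isProperLoss_iff_inner_le_of_mem_image_add {ℓ : E → E} {Δ K : Set E} (hK₀ : (0 : E) ∈ K)
    (hK : ∀ k ∈ K, ∀ q ∈ Δ, 0 ≤ ⟪k, q⟫_ℝ) :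
    IsProperLoss ℓ Δ ↔ ∀ q ∈ Δ, ∀ s ∈ ℓ '' Δ + K, ⟪ℓ q, q⟫_ℝ ≤ ⟪s, q⟫_ℝ := by
  constructor
  · rintro h q hq _ ⟨_, ⟨p, hp, rfl⟩, k, hk, rfl⟩
    rw [inner_add_left]
    linarith [h p hp q hq, hK k hk q hq]
  · intro h p hp q hq
    simpa using h q hq (ℓ p + 0) (Set.add_mem_add (Set.mem_image_of_mem ℓ hp) hK₀)

end ConcaveSupport

theorem EuclideanSpace.inner_nonneg_of_nonneg {n : ℕ} {x y : EuclideanSpace ℝ (Fin n)}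
    (hx : ∀ i, 0 ≤ x i) (hy : ∀ i, 0 ≤ y i) : 0 ≤ ⟪x, y⟫_ℝ := by
  rw [PiLp.inner_apply]
  exact Finset.sum_nonneg fun i _ => mul_nonneg (hy i) (hx i)

theorem proper_iff_supergradient_of_concave_support_general
    (n : ℕ) (ℓ : EuclideanSpace ℝ (Fin n) → EuclideanSpace ℝ (Fin n))
    (Δ : Set (EuclideanSpace ℝ (Fin n)))
    (hΔ : Δ = {p | (∀ i, 0 < p i) ∧ ∑ i, p i = 1})
    (S : Set (EuclideanSpace ℝ (Fin n)))
    (hS : S = ℓ '' Δ + {x | ∀ i, 0 ≤ x i})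
    (ρ : EuclideanSpace ℝ (Fin n) → EReal)
    (hρ : ∀ x, ρ x = ⨅ s ∈ closure (convexHull ℝ S), ((⟪s, x⟫_ℝ : ℝ) : EReal)) :
    (∀ p ∈ Δ, ∀ q ∈ Δ, ⟪ℓ q, q⟫_ℝ ≤ ⟪ℓ p, q⟫_ℝ) ↔
      (∀ p ∈ Δ, ∀ q : EuclideanSpace ℝ (Fin n),
        ρ q - ρ p ≤ ((⟪ℓ p, q - p⟫_ℝ : ℝ) : EReal)) := by
  obtain rfl : ρ = concaveSupport S :=
    funext fun x => (hρ x).trans (congrFun (concaveSupport_closure_convexHull S) x)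
  set K : Set (EuclideanSpace ℝ (Fin n)) := {x | ∀ i, 0 ≤ x i}
  have hK₀ : (0 : EuclideanSpace ℝ (Fin n)) ∈ K := fun _ => le_rfl
  have hK : ∀ k ∈ K, ∀ q ∈ Δ, 0 ≤ ⟪k, q⟫_ℝ := fun k hk q hq =>
    EuclideanSpace.inner_nonneg_of_nonneg hk fun i => ((hΔ ▸ hq).1 i).le
  have hmem : ∀ p ∈ Δ, ℓ p ∈ S := fun p hp =>
    hS ▸ ⟨ℓ p, Set.mem_image_of_mem ℓ hp, 0, hK₀, add_zero _⟩
  refine (isProperLoss_iff_inner_le_of_mem_image_add hK₀ hK).trans ?_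
  rw [← hS]
  refine forall₂_congr fun p hp => ?_
  rw [← coe_le_concaveSupport_iff,
    supergradient_iff_eq_inner (concaveSupport_zero ⟨_, hmem p hp⟩) (concaveSupport_le (hmem p hp))]
  exact (concaveSupport_le (hmem p hp) p).ge_iff_eq

/-- A loss `ℓ : Δⁿ → ℝ₊ⁿ` with superprediction set `S = ℓ(Δⁿ) + ℝ₊ⁿ` is proper
(`⟪ℓ q, q⟫ ≤ ⟪ℓ p, q⟫` for all `p, q ∈ Δⁿ`) iff for every `p ∈ Δⁿ`, `ℓ p` is a
supergradient at `p` of the concave support function `ρ` of `cl conv S`. -/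
theorem proper_iff_supergradient_of_concave_support
    (n : ℕ) (ℓ : EuclideanSpace ℝ (Fin n) → EuclideanSpace ℝ (Fin n))
    (Δ : Set (EuclideanSpace ℝ (Fin n)))
    (hΔ : Δ = {p | (∀ i, 0 < p i) ∧ ∑ i, p i = 1})
    (hℓ : ∀ p ∈ Δ, ∀ i, 0 ≤ ℓ p i)
    (S : Set (EuclideanSpace ℝ (Fin n)))
    (hS : S = ℓ '' Δ + {x | ∀ i, 0 ≤ x i})
    (ρ : EuclideanSpace ℝ (Fin n) → EReal)
    (hρ : ∀ x, ρ x = ⨅ s ∈ closure (convexHull ℝ S), ((⟪s, x⟫_ℝ : ℝ) : EReal)) :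
    (∀ p ∈ Δ, ∀ q ∈ Δ, ⟪ℓ q, q⟫_ℝ ≤ ⟪ℓ p, q⟫_ℝ) ↔
      (∀ p ∈ Δ, ∀ q : EuclideanSpace ℝ (Fin n),
        ρ q - ρ p ≤ ((⟪ℓ p, q - p⟫_ℝ : ℝ) : EReal)) :=
  proper_iff_supergradient_of_concave_support_general n ℓ Δ hΔ S hS ρ hρ
end

section
/- Let C be a salient closed convex cone in ℝⁿ and let A₁, …, Aₘ be closed convex nonempty subsets of C \ {0}, each with recession cone equal to C. Then the intersection A₁ ∩ ⋯ ∩ Aₘ is nonempty. -/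
open Pointwise

/-! Pick `aⱼ ∈ Aⱼ` and set `s = ∑ⱼ aⱼ`. Each `aⱼ` lies in `C`, and the recession set of any set is
closed under addition, so for every `i` the vector `∑_{j ≠ i} aⱼ` is a recession direction of `Aᵢ`;
hence `s = aᵢ + ∑_{j ≠ i} aⱼ ∈ Aᵢ`. -/

section Recession

variable {M : Type*}

def recessionAddSubmonoid [AddMonoid M] (A : Set M) : AddSubmonoid M where
  carrier := {d | ∀ x ∈ A, x + d ∈ A}
  zero_mem' x hx := by rwa [add_zero]
  add_mem' hd he x hx := by
    rw [← add_assoc]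
    exact he _ (hd x hx)

theorem sum_mem_of_mem_recessionAddSubmonoid [AddCommMonoid M] {ι : Type*} [Fintype ι]
    {A : Set M} {a : ι → M} {i : ι} (hi : a i ∈ A)
    (hrec : ∀ j ≠ i, a j ∈ recessionAddSubmonoid A) : ∑ j, a j ∈ A := by
  classical
  rw [← Finset.add_sum_erase _ _ (Finset.mem_univ i)]
  exact AddSubmonoid.sum_mem _ (fun j hj => hrec j (Finset.ne_of_mem_erase hj)) _ hi

end Recession

theorem iInter_nonempty_of_recessionCone_eq_cone_general
    (n : ℕ) (C : Set (EuclideanSpace ℝ (Fin n)))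
    (m : ℕ) (A : Fin m → Set (EuclideanSpace ℝ (Fin n)))
    (hAne : ∀ i, (A i).Nonempty)
    (hAsub : ∀ i, A i ⊆ C \ {0})
    (hArec : ∀ i, {d | ∀ x ∈ A i, x + d ∈ A i} = C) :
    (⋂ i, A i).Nonempty := by
  choose a ha using hAne
  have haC : ∀ i, a i ∈ C := fun i => (hAsub i (ha i)).1
  refine ⟨∑ j, a j, Set.mem_iInter.2 fun i =>
    sum_mem_of_mem_recessionAddSubmonoid (ha i) fun j _ => ?_⟩
  show a j ∈ {d | ∀ x ∈ A i, x + d ∈ A i}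
  rw [hArec i]
  exact haC j

/-- If `C` is a salient closed convex cone in `ℝⁿ` and `A₁, …, Aₘ` are closed convex
nonempty subsets of `C \ {0}`, each with recession cone equal to `C`, then
`A₁ ∩ ⋯ ∩ Aₘ` is nonempty. -/
theorem iInter_nonempty_of_recessionCone_eq_cone
    (n : ℕ) (C : Set (EuclideanSpace ℝ (Fin n)))
    (hCclosed : IsClosed C) (hCconv : Convex ℝ C)
    (hCcone : ∀ t : ℝ, 0 < t → t • C ⊆ C)
    (hCsalient : ∀ x ∈ C, -x ∈ C → x = 0)
    (m : ℕ) (A : Fin m → Set (EuclideanSpace ℝ (Fin n)))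
    (hAclosed : ∀ i, IsClosed (A i)) (hAconv : ∀ i, Convex ℝ (A i))
    (hAne : ∀ i, (A i).Nonempty)
    (hAsub : ∀ i, A i ⊆ C \ {0})
    (hArec : ∀ i, {d | ∀ x ∈ A i, x + d ∈ A i} = C) :
    (⋂ i, A i).Nonempty :=
  iInter_nonempty_of_recessionCone_eq_cone_general n C m A hAne hAsub hArec
end

section
/- Let S ∈ cvx(E) be a closed convex set in a finite-dimensional real vector space E, and let α, β ≥ 0. Define epimultiplication α ⋆ S = αS if α ≠ 0 and α ⋆ S = rec(S) if α = 0. Then (α ⋆ S) + (β ⋆ S) = (α + β) ⋆ S, and rec(α ⋆ S) = rec(S). -/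
open Pointwise

/-- The recession cone `rec(S) = {d | S + d ⊆ S}`. -/
def recCone {E : Type*} [AddCommMonoid E] (S : Set E) : Set E :=
  {d | ∀ x ∈ S, x + d ∈ S}

/-- Epimultiplication: `α ⋆ S = αS` if `α ≠ 0`, and `0 ⋆ S = rec(S)`. -/
noncomputable def epiSmul {E : Type*} [AddCommMonoid E] [SMul ℝ E] (a : ℝ) (S : Set E) :
    Set E :=
  if a = 0 then recCone S else a • S

lemma zero_mem_recCone {E : Type*} [AddCommMonoid E] (S : Set E) : (0 : E) ∈ recCone S := by
  intro x hx; simpa using hx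

lemma recCone_add_self {E : Type*} [AddCommMonoid E] (S : Set E) :
    recCone S + recCone S = recCone S := by
  apply Set.Subset.antisymm
  · rintro _ ⟨d, hd, e, he, rfl⟩ x hx
    have := he (x + d) (hd x hx)
    simpa [add_assoc] using this
  · intro d hd
    exact ⟨0, zero_mem_recCone S, d, hd, by simp⟩

lemma smul_mem_recCone {E : Type*} [AddCommGroup E] [Module ℝ E] {S : Set E}
    (hS : Convex ℝ S) {d : E} {t : ℝ} (ht : 0 ≤ t) (hd : d ∈ recCone S) :
    t • d ∈ recCone S := by
  intro x hx
  have hnat : ∀ n : ℕ, x + (n : ℝ) • d ∈ S := by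
    intro n
    induction n with
    | zero => simpa using hx
    | succ n ih =>
      have := hd _ ih
      have h : x + ((n : ℝ) + 1) • d = x + (n : ℝ) • d + d := by
        rw [add_smul, one_smul, add_assoc]
      rw [Nat.cast_succ, h]
      exact this
  rcases eq_or_lt_of_le ht with h0 | h0
  · simpa [← h0] using hx
  · set n : ℕ := ⌈t⌉₊ with hn
    have htn : t ≤ (n : ℝ) := Nat.le_ceil t
    have hnpos : (0 : ℝ) < n := lt_of_lt_of_le h0 htn
    set μ : ℝ := t / n with hμ
    have hμ0 : 0 ≤ μ := div_nonneg ht hnpos.le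
    have hμ1 : μ ≤ 1 := (div_le_one hnpos).mpr htn
    have hc := hS hx (hnat n) (by linarith : (0:ℝ) ≤ 1 - μ) hμ0 (by ring)
    have hμn : μ * (n : ℝ) = t := div_mul_cancel₀ t hnpos.ne'
    have : (1 - μ) • x + μ • (x + (n : ℝ) • d) = x + t • d := by
      rw [smul_add, smul_smul, hμn, sub_smul, one_smul]
      abel
    rwa [this] at hc

lemma recCone_smul {E : Type*} [AddCommGroup E] [Module ℝ E] {S : Set E}
    (hS : Convex ℝ S) {c : ℝ} (hc : 0 < c) : recCone (c • S) = recCone S := by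
  apply Set.Subset.antisymm
  · intro d hd
    have hinv : c⁻¹ • d ∈ recCone S := by
      intro x hx
      obtain ⟨z, hz, hze⟩ := hd (c • x) ⟨x, hx, rfl⟩
      have : x + c⁻¹ • d = z := by
        have := congrArg (fun y => c⁻¹ • y) hze
        simpa [smul_add, smul_smul, inv_mul_cancel₀ hc.ne'] using this.symm
      rwa [this]
    have := smul_mem_recCone hS hc.le hinv
    rwa [smul_smul, mul_inv_cancel₀ hc.ne', one_smul] at this
  · intro d hd
    rintro _ ⟨x, hx, rfl⟩
    have hinv : c⁻¹ • d ∈ recCone S := by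
      have := smul_mem_recCone hS (inv_nonneg.mpr hc.le) hd
      exact this
    refine ⟨x + c⁻¹ • d, hinv x hx, ?_⟩
    show c • (x + c⁻¹ • d) = c • x + d
    rw [smul_add, smul_smul, mul_inv_cancel₀ hc.ne', one_smul]

lemma smul_add_recCone {E : Type*} [AddCommGroup E] [Module ℝ E] {S : Set E}
    (hS : Convex ℝ S) {c : ℝ} (hc : 0 < c) : c • S + recCone S = c • S := by
  apply Set.Subset.antisymm
  · rintro _ ⟨y, hy, d, hd, rfl⟩
    have hd' : d ∈ recCone (c • S) := by rw [recCone_smul hS hc]; exact hd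
    exact hd' y hy
  · intro y hy
    exact ⟨y, hy, 0, zero_mem_recCone S, by simp⟩

lemma recCone_recCone {E : Type*} [AddCommMonoid E] (S : Set E) :
    recCone (recCone S) = recCone S := by
  apply Set.Subset.antisymm
  · intro d hd
    simpa using hd 0 (zero_mem_recCone S)
  · intro d hd e he x hx
    have := hd (x + e) (he x hx)
    simpa [add_assoc] using this

/-- For a closed convex nonempty set `S` in a finite-dimensional real vector space and
`α, β ≥ 0`: `(α ⋆ S) + (β ⋆ S) = (α + β) ⋆ S` and `rec(α ⋆ S) = rec(S)`. -/
theorem epiSmul_add_and_recCone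
    {E : Type*} [NormedAddCommGroup E] [NormedSpace ℝ E] [FiniteDimensional ℝ E]
    (S : Set E) (hSclosed : IsClosed S) (hSconv : Convex ℝ S) (hSne : S.Nonempty)
    (a b : ℝ) (ha : 0 ≤ a) (hb : 0 ≤ b) :
    epiSmul a S + epiSmul b S = epiSmul (a + b) S ∧
      recCone (epiSmul a S) = recCone S := by
  rcases eq_or_lt_of_le ha with ha0 | ha0 <;> rcases eq_or_lt_of_le hb with hb0 | hb0
  · simp only [epiSmul, ← ha0, ← hb0, add_zero, if_pos rfl]
    exact ⟨recCone_add_self S, recCone_recCone S⟩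
  · simp only [epiSmul, ← ha0, zero_add, if_pos rfl, if_neg hb0.ne']
    refine ⟨?_, recCone_recCone S⟩
    rw [add_comm]
    exact smul_add_recCone hSconv hb0
  · simp only [epiSmul, ← hb0, add_zero, if_pos rfl, if_neg ha0.ne']
    exact ⟨smul_add_recCone hSconv ha0, recCone_smul hSconv ha0⟩
  · have hab : a + b ≠ 0 := by positivity
    simp only [epiSmul, if_neg ha0.ne', if_neg hb0.ne', if_neg hab]
    exact ⟨(hSconv.add_smul ha hb).symm, recCone_smul hSconv ha0⟩
end
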